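/- For all n ≥ 1, the specialization ((q/a)^{n-1} P(T_{2,n}))|_{a=0}, viewed as a Laurent polynomial in q, has the form q^{n-1} times a polynomial in s = q^{-1} - q of degree n-1 (in s, allowing s^{-1} exactly when n is even), whose leading coefficient in s is 1. -/

import Mathlib

/-
The constant term in `a` of `(q / a) ^ (n - 1) * P n` is `q ^ (n - 1)` times the coefficient
`f n` of `a ^ (n - 1)` in `P n`. As `-a (q - q⁻¹) = a s`, reading off that coefficient in the
recursion gives `f (n + 2) = s * f (n + 1) + f n` with `f 0 = s⁻¹` and `f 1 = 1`, so `f n` is a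
Fibonacci-type Laurent polynomial in `s`: monic of degree `n - 1`, supported in `[-1, n - 1]`,
and its `s⁻¹`-coefficient alternates `1, 0, 1, 0, …`.
-/

open LaurentPolynomial

/-- The variable `q`, living in the field `ℚ(q)` of rational functions. -/
noncomputable def q0 : RatFunc ℚ := RatFunc.X

/-- The HOMFLY polynomials `P(T_{2,n})` of the `(2,n)` torus links, as Laurent
polynomials in the variable `a` (the Laurent variable `T`) with coefficients in `ℚ(q)`:
`P(T_{2,0}) = (a - a⁻¹)/(q - q⁻¹)`, `P(T_{2,1}) = 1`, and
`P(T_{2,n}) = -a(q - q⁻¹) P(T_{2,n-1}) + a² P(T_{2,n-2})` for `n ≥ 2`. -/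
noncomputable def P : ℕ → LaurentPolynomial (RatFunc ℚ)
  | 0 => (T 1 - T (-1)) * C (q0 - q0⁻¹)⁻¹
  | 1 => 1
  | n + 2 => -(T 1 * C (q0 - q0⁻¹)) * P (n + 1) + T 1 ^ 2 * P n

/-- The specialization at `a = 0`: the constant term in `a` of a Laurent polynomial. -/
noncomputable def specA (p : LaurentPolynomial (RatFunc ℚ)) : RatFunc ℚ := p.coeff 0

namespace LaurentPolynomial

variable {R : Type*}

theorem coeff_T_mul [Semiring R] (m k : ℤ) (f : R[T;T⁻¹]) :
    (T m * f).coeff k = f.coeff (k - m) := by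
  rw [T, AddMonoidAlgebra.coeff_single_mul_apply, one_mul, neg_add_eq_sub]

theorem coeff_C_mul [Semiring R] (r : R) (k : ℤ) (f : R[T;T⁻¹]) :
    (C r * f).coeff k = r * f.coeff k := by
  rw [← single_eq_C, AddMonoidAlgebra.coeff_single_mul_apply, neg_zero, zero_add]

theorem coeff_zero_C_mul_T_neg_one_pow_mul [CommSemiring R] (r : R) (m : ℕ) (f : R[T;T⁻¹]) :
    ((C r * T (-1)) ^ m * f).coeff 0 = r ^ m * f.coeff m := by
  rw [mul_pow, ← map_pow, T_pow, mul_assoc, coeff_C_mul, coeff_T_mul]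
  congr 2
  ring

theorem eval₂_eq_sum_Icc {S : Type*} [CommSemiring R] [CommSemiring S] (f : R →+* S) (x : Sˣ)
    (p : R[T;T⁻¹]) {lo hi : ℤ} (hp : ∀ i, p.coeff i ≠ 0 → i ∈ Finset.Icc lo hi) :
    eval₂ f x p = ∑ i ∈ Finset.Icc lo hi, f (p.coeff i) * ↑(x ^ i) := by
  conv_lhs => rw [← AddMonoidAlgebra.sum_coeff_single p]
  rw [map_finsuppSum, Finsupp.sum_of_support_subset _
    (fun i hi => hp i (Finsupp.mem_support_iff.mp hi))]
  · simp only [single_eq_C_mul_T, eval₂_C_mul_T]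
  · simp

end LaurentPolynomial

/-- The coefficient of `a ^ (n - 1)` in `P n`, as a Laurent polynomial in `s = q⁻¹ - q`. -/
noncomputable def aCoeffInS : ℕ → ℤ[T;T⁻¹]
  | 0 => T (-1)
  | 1 => 1
  | n + 2 => T 1 * aCoeffInS (n + 1) + aCoeffInS n

theorem coeff_aCoeffInS_add_two (n : ℕ) (i : ℤ) :
    (aCoeffInS (n + 2)).coeff i =
      (aCoeffInS (n + 1)).coeff (i - 1) + (aCoeffInS n).coeff i := by
  rw [aCoeffInS, AddMonoidAlgebra.coeff_add, Finsupp.add_apply, coeff_T_mul]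

theorem coeff_aCoeffInS_of_lt {n : ℕ} {i : ℤ} (hi : (n : ℤ) - 1 < i) :
    (aCoeffInS n).coeff i = 0 := by
  induction n using Nat.twoStepInduction generalizing i with
  | zero => rw [aCoeffInS, T_apply, if_neg (by omega)]
  | one => rw [aCoeffInS, ← T_zero, T_apply, if_neg (by omega)]
  | more n ih₀ ih₁ =>
    push_cast at hi
    rw [coeff_aCoeffInS_add_two, ih₁ (by push_cast; omega), ih₀ (by omega), add_zero]

theorem coeff_aCoeffInS_of_lt_neg_one {n : ℕ} {i : ℤ} (hi : i < -1) :
    (aCoeffInS n).coeff i = 0 := by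
  induction n using Nat.twoStepInduction generalizing i with
  | zero => rw [aCoeffInS, T_apply, if_neg (by omega)]
  | one => rw [aCoeffInS, ← T_zero, T_apply, if_neg (by omega)]
  | more n ih₀ ih₁ =>
    rw [coeff_aCoeffInS_add_two, ih₁ (by omega), ih₀ hi, add_zero]

theorem coeff_aCoeffInS_natCast_sub_one (n : ℕ) :
    (aCoeffInS n).coeff ((n : ℤ) - 1) = 1 := by
  induction n using Nat.twoStepInduction with
  | zero => simp [aCoeffInS, T_apply]
  | one => simp [aCoeffInS, ← T_zero, T_apply]
  | more n ih₀ ih₁ =>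
    rw [coeff_aCoeffInS_add_two, coeff_aCoeffInS_of_lt (n := n) (by push_cast; omega),
      add_zero]
    push_cast at ih₁ ⊢
    convert ih₁ using 2
    ring

theorem coeff_aCoeffInS_neg_one (n : ℕ) :
    (aCoeffInS n).coeff (-1) = if Even n then 1 else 0 := by
  induction n using Nat.twoStepInduction with
  | zero => simp [aCoeffInS, T_apply]
  | one => simp [aCoeffInS, ← T_zero, T_apply]
  | more n ih₀ ih₁ =>
    rw [coeff_aCoeffInS_add_two, coeff_aCoeffInS_of_lt_neg_one (by omega), zero_add, ih₀]
    simp [Nat.even_add]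

theorem q0_inv_sub_q0_ne_zero : q0⁻¹ - q0 ≠ 0 := by
  have hq : q0 ≠ 0 := RatFunc.X_ne_zero
  have hpoly : (Polynomial.X ^ 2 - Polynomial.C 1 : Polynomial ℚ) ≠ 0 :=
    Polynomial.X_pow_sub_C_ne_zero two_pos 1
  intro h
  apply RatFunc.algebraMap_ne_zero hpoly
  rw [map_sub, map_pow, RatFunc.algebraMap_X, RatFunc.algebraMap_C, map_one, ← q0]
  field_simp at h
  linear_combination -h

noncomputable def sUnit : (RatFunc ℚ)ˣ := Units.mk0 _ q0_inv_sub_q0_ne_zero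

theorem P_add_two (n : ℕ) :
    P (n + 2) = T 1 * (C (q0⁻¹ - q0) * P (n + 1)) + T 2 * P n := by
  rw [P, T_pow, ← neg_sub q0, map_neg, Nat.cast_ofNat, mul_one]
  ring

theorem coeff_P_natCast_sub_one (n : ℕ) :
    (P n).coeff ((n : ℤ) - 1) = eval₂ (Int.castRingHom _) sUnit (aCoeffInS n) := by
  induction n using Nat.twoStepInduction with
  | zero =>
    rw [P, mul_comm, coeff_C_mul, aCoeffInS, eval₂_T]
    simp [sUnit, T_apply, ← inv_neg]
  | one =>
    rw [P, aCoeffInS, map_one, Nat.cast_one, sub_self, ← T_zero, T_apply, if_pos rfl]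
  | more n ih₀ ih₁ =>
    rw [P_add_two, aCoeffInS, map_add, map_mul, eval₂_T, ← ih₀, ← ih₁, AddMonoidAlgebra.coeff_add, Finsupp.add_apply, coeff_T_mul, coeff_C_mul,
      coeff_T_mul, zpow_one, sUnit, Units.val_mk0]
    push_cast
    ring_nf

theorem coeff_aCoeffInS_ne_zero {n : ℕ} {i : ℤ} (hi : (aCoeffInS n).coeff i ≠ 0) :
    i ∈ Finset.Icc (-1 : ℤ) ((n : ℤ) - 1) :=
  Finset.mem_Icc.mpr ⟨not_lt.mp (hi ∘ coeff_aCoeffInS_of_lt_neg_one),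
    not_lt.mp (hi ∘ coeff_aCoeffInS_of_lt)⟩

/-- For all `n ≥ 1`, the specialization `((q/a)^{n-1} P(T_{2,n}))|_{a=0}` has the form
`q^{n-1}` times a Laurent polynomial in `s = q⁻¹ - q` of degree `n-1`, with coefficients
`c i` of `s^i` vanishing for `i > n-1` and for `i < -1`, with `s⁻¹` occurring exactly
when `n` is even, and with leading coefficient (in `s`) equal to `1`. -/
theorem stmt_4 (n : ℕ) (hn : 1 ≤ n) :
    ∃ c : ℤ → ℤ,
      c ((n : ℤ) - 1) = 1 ∧
      (∀ i : ℤ, (n : ℤ) - 1 < i → c i = 0) ∧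
      (∀ i : ℤ, i < -1 → c i = 0) ∧
      (Even n ↔ c (-1) ≠ 0) ∧
      specA ((C q0 * T (-1)) ^ (n - 1) * P n) =
        q0 ^ (n - 1) *
          ∑ i ∈ Finset.Icc (-1 : ℤ) ((n : ℤ) - 1), (c i : RatFunc ℚ) * (q0⁻¹ - q0) ^ i := by
  refine ⟨(aCoeffInS n).coeff, coeff_aCoeffInS_natCast_sub_one n,
    fun i hi => coeff_aCoeffInS_of_lt hi, fun i hi => coeff_aCoeffInS_of_lt_neg_one hi, ?_, ?_⟩
  · rw [coeff_aCoeffInS_neg_one]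
    split_ifs <;> simp [*]
  · rw [specA, coeff_zero_C_mul_T_neg_one_pow_mul, Nat.cast_sub hn, Nat.cast_one,
      coeff_P_natCast_sub_one, eval₂_eq_sum_Icc _ _ _ fun i => coeff_aCoeffInS_ne_zero]
    simp [sUnit, Units.val_zpow_eq_zpow_val]
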